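/- Let (θ_n)_{n≥0} be a sequence of irrational numbers in [0,1], and for n≥1 set Ψ_n = T_{θ₀}∘T_{θ₁}∘⋯∘T_{θ_{n−1}} : [−1,1]→[−1,1]. Then for every Borel set B⊆[−1,1] the sequence (λ(Ψ_n^{−1}(B)))_{n≥1} converges, where λ denotes Lebesgue measure on [−1,1]; moreover θ₀·G(θ₀)·λ(B) ≤ lim_{n→∞} λ(Ψ_n^{−1}(B)) ≤ (2−θ₀·G(θ₀))·λ(B). -/

import Mathlib

noncomputable section

open Set Filter MeasureTheory Topology

/-- The Gauss map `G(ρ) = {1/ρ}`, `G(0) = 0`. -/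
def gaussMap (ρ : ℝ) : ℝ := if ρ = 0 then 0 else Int.fract (1 / ρ)

/-- The fiber maps `T_ρ : [-1,1] → [-1,1]` of the skew product. -/
def fiberMap (ρ α : ℝ) : ℝ :=
  if ρ = 0 then 0
  else if α ≤ 0 then -α
  else if α ≤ ρ * gaussMap ρ then -α / (ρ * gaussMap ρ)
  else Int.fract ((1 - α) / ρ)

/-- The skew product `T(ρ,α) = (G(ρ), T_ρ(α))`. -/
def skewProd (p : ℝ × ℝ) : ℝ × ℝ := (gaussMap p.1, fiberMap p.1 p.2)

/-- The rectangle `R = [0,1] × [-1,1]`. -/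
def Rect : Set (ℝ × ℝ) := Icc (0 : ℝ) 1 ×ˢ Icc (-1 : ℝ) 1

/-- `M = ([0,1] ∖ ℚ) × [-1,1]`. -/
def Mset : Set (ℝ × ℝ) := {p | p ∈ Rect ∧ Irrational p.1}

/-- The `n`-th partial quotient of the continued fraction expansion of `θ`:
`a_n(θ) = ⌊1 / Gⁿ(θ)⌋`. -/
def pquot (θ : ℝ) (n : ℕ) : ℕ := ⌊1 / gaussMap^[n] θ⌋₊

/-- The set `𝔼_∞` of irrational numbers in `(0,1)` all of whose partial quotients are even
and tend to infinity. -/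
def Einf : Set ℝ :=
  {θ | θ ∈ Ioo (0 : ℝ) 1 ∧ Irrational θ ∧ (∀ n, Even (pquot θ n)) ∧
    Tendsto (fun n => pquot θ n) atTop atTop}

/-- The composition `Ψ_n = T_{θ₀} ∘ T_{θ₁} ∘ ⋯ ∘ T_{θ_{n-1}}`. -/
def fiberComp (θ : ℕ → ℝ) (n : ℕ) (x : ℝ) : ℝ :=
  (List.range n).foldr (fun j y => fiberMap (θ j) y) x

/-! Write `p(A)` and `q(A)` for the measures of the positive and negative parts of `A ⊆ [-1,1]`,
and `c = ρ G(ρ) = 1 - ρ ⌊1/ρ⌋`. The map `T_ρ` sends `[-1,0)` to `(0,1]` by `x ↦ -x`, `(0,c]`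
affinely onto `[-1,0)`, and `(c,1]` onto `[0,1)` by `⌊1/ρ⌋` affine branches of slope `-1/ρ`;
hence `p(T_ρ⁻¹A) = c q(A) + (1-c) p(A)` and `q(T_ρ⁻¹A) = p(A)`. Along the sequence `Ψ_n⁻¹ B`
the difference `p - q` is multiplied by `-c_n ∈ [-1/2, 0]` at each step, while the total
measure `s_n = p_n + q_n` moves by `(1 - c_n)(p_n - q_n)`. So `s_{n+2}` lies between `s_n` and
`s_{n+1}`, the sequence is Cauchy, and its limit lies between `s_0 = λ(B)` and
`s_1 = (2 - c_0) p_0 + c_0 q_0`, which is within `[c_0 λ(B), (2 - c_0) λ(B)]`. -/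

lemma mem_uIcc_zero_one_of_forall_mem_uIcc {α : Type*} [Lattice α] {s : ℕ → α}
    (h : ∀ n, s (n + 2) ∈ uIcc (s n) (s (n + 1))) (m : ℕ) : s m ∈ uIcc (s 0) (s 1) := by
  have hnested : ∀ n, uIcc (s n) (s (n + 1)) ⊆ uIcc (s 0) (s 1) := by
    intro n
    induction n with
    | zero => exact subset_rfl
    | succ n ih => exact (uIcc_subset_uIcc right_mem_uIcc (h n)).trans ih
  exact hnested m left_mem_uIcc

section Recurrence

variable {c p q : ℕ → ℝ} (hc : ∀ n, c n ∈ Icc 0 (1 / 2))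
  (hp : ∀ n, p (n + 1) = c n * q n + (1 - c n) * p n) (hq : ∀ n, q (n + 1) = p n)
include hc hp hq

lemma abs_sub_le_of_recurrence (n : ℕ) : |p n - q n| ≤ (1 / 2) ^ n * |p 0 - q 0| := by
  induction n with
  | zero => simp
  | succ n ih =>
    have hstep : p (n + 1) - q (n + 1) = -(c n * (p n - q n)) := by rw [hp, hq]; ring
    rw [hstep, abs_neg, abs_mul, abs_of_nonneg (hc n).1, pow_succ]
    nlinarith [(hc n).2, abs_nonneg (p n - q n)]

lemma add_mem_uIcc_of_recurrence (n : ℕ) :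
    p (n + 2) + q (n + 2) ∈ uIcc (p n + q n) (p (n + 1) + q (n + 1)) := by
  obtain ⟨hc0, hc2⟩ := hc n
  obtain ⟨hc0', hc2'⟩ := hc (n + 1)
  rw [hp (n + 1), hq (n + 1), hp n, hq n, mem_uIcc]
  have hc1 : 0 ≤ 1 - c (n + 1) := by linarith
  rcases le_total (q n) (p n) with hd | hd
  · refine Or.inl ⟨?_, ?_⟩ <;> nlinarith [mul_nonneg (mul_nonneg hc0 hc0') (sub_nonneg.2 hd),
      mul_nonneg (mul_nonneg hc0 hc1) (sub_nonneg.2 hd)]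
  · refine Or.inr ⟨?_, ?_⟩ <;> nlinarith [mul_nonneg (mul_nonneg hc0 hc0') (sub_nonneg.2 hd),
      mul_nonneg (mul_nonneg hc0 hc1) (sub_nonneg.2 hd)]

lemma exists_tendsto_add_of_recurrence (hp0 : 0 ≤ p 0) (hq0 : 0 ≤ q 0) :
    ∃ L, Tendsto (fun n => p n + q n) atTop (𝓝 L) ∧
      c 0 * (p 0 + q 0) ≤ L ∧ L ≤ (2 - c 0) * (p 0 + q 0) := by
  have hdist : ∀ n, dist (p n + q n) (p (n + 1) + q (n + 1)) ≤ |p 0 - q 0| * (1 / 2) ^ n := by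
    intro n
    have hdiff : p n + q n - (p (n + 1) + q (n + 1)) = -((1 - c n) * (p n - q n)) := by
      rw [hp, hq]; ring
    rw [Real.dist_eq, hdiff, abs_neg, abs_mul, abs_of_nonneg (by linarith [(hc n).2])]
    nlinarith [(hc n).1, abs_nonneg (p n - q n), abs_sub_le_of_recurrence hc hp hq n]
  obtain ⟨L, hL⟩ := cauchySeq_tendsto_of_complete
    (cauchySeq_of_le_geometric (1 / 2) |p 0 - q 0| (by norm_num) hdist)
  have hmem : L ∈ uIcc (p 0 + q 0) (p 1 + q 1) :=
    isClosed_Icc.mem_of_tendsto hL (Eventually.of_forall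
      (mem_uIcc_zero_one_of_forall_mem_uIcc (add_mem_uIcc_of_recurrence hc hp hq)))
  have hbounds :
      uIcc (p 0 + q 0) (p 1 + q 1) ⊆ Icc (c 0 * (p 0 + q 0)) ((2 - c 0) * (p 0 + q 0)) := by
    obtain ⟨hc0, hc2⟩ := hc 0
    rw [hp, hq]
    exact uIcc_subset_Icc ⟨by nlinarith, by nlinarith⟩ ⟨by nlinarith, by nlinarith⟩
  exact ⟨L, hL, hbounds hmem⟩

end Recurrence

lemma volume_preimage_mul_add {a : ℝ} (ha : a ≠ 0) (b : ℝ) (s : Set ℝ) :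
    volume ((fun x => a * x + b) ⁻¹' s) = ENNReal.ofReal |a⁻¹| * volume s := by
  rw [show (fun x => a * x + b) = (· + b) ∘ (a * ·) from rfl, preimage_comp,
    Real.volume_preimage_mul_left ha, measure_preimage_add_right]

lemma volume_fract_preimage_inter_Ico_natCast (A : Set ℝ) (a : ℕ) :
    volume (Int.fract ⁻¹' A ∩ Ico (a : ℝ) (a + 1)) = volume (A ∩ Ico 0 1) := by
  have hset : Int.fract ⁻¹' A ∩ Ico (a : ℝ) (a + 1) = (fun x : ℝ => x - a) ⁻¹' (A ∩ Ico 0 1) := by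
    ext y
    simp only [mem_inter_iff, mem_preimage, mem_Ico, sub_nonneg, sub_lt_iff_lt_add']
    refine and_congr_left fun hy => ?_
    rw [← Int.fract_sub_natCast y a, Int.fract_eq_self.2 ⟨by linarith, by linarith⟩]
  rw [hset]
  exact measure_preimage_add_right _ _ _

lemma volume_fract_preimage_inter_Ico {A : Set ℝ} (hA : MeasurableSet A) (a : ℕ) :
    volume (Int.fract ⁻¹' A ∩ Ico 0 (a : ℝ)) = a * volume (A ∩ Ico 0 1) := by
  induction a with
  | zero => simp
  | succ a ih =>
    have hsplit : Ico (0 : ℝ) (a + 1) = Ico (0 : ℝ) a ∪ Ico (a : ℝ) (a + 1) :=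
      (Ico_union_Ico_eq_Ico (Nat.cast_nonneg a) (by linarith)).symm
    rw [Nat.cast_succ, hsplit, inter_union_distrib_left,
      measure_union (Ico_disjoint_Ico_same.mono inter_subset_right inter_subset_right)
        ((measurable_fract hA).inter measurableSet_Ico),
      ih, volume_fract_preimage_inter_Ico_natCast, Nat.cast_succ, add_one_mul]

lemma volume_inter_Ico_zero_one {A : Set ℝ} (hA : A ⊆ Iic 1) :
    volume (A ∩ Ico 0 1) = volume (A ∩ Ioi 0) := by
  have hIoc : A ∩ Ioi 0 = A ∩ Ioc 0 1 := by
    ext x; exact ⟨fun ⟨h, h0⟩ => ⟨h, h0, hA h⟩, fun ⟨h, h0, _⟩ => ⟨h, h0⟩⟩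
  rw [hIoc]
  exact measure_congr (ae_eq_set_inter (ae_eq_refl A) Ico_ae_eq_Ioc)

lemma volume_Ioc_inter_preimage_neg_div {c : ℝ} (hc : 0 ≤ c) {A : Set ℝ} (hA : A ⊆ Ici (-1)) :
    volume (Ioc 0 c ∩ (fun x => -x / c) ⁻¹' A) = ENNReal.ofReal c * volume (A ∩ Iio 0) := by
  rcases hc.eq_or_lt with rfl | hc
  · simp
  have hset : Ioc 0 c ∩ (fun x => -x / c) ⁻¹' A = (fun x => -c⁻¹ * x + 0) ⁻¹' (A ∩ Iio 0) := by
    ext x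
    have hx : -c⁻¹ * x + 0 = -x / c := by ring
    simp only [mem_inter_iff, mem_preimage, mem_Ioc, mem_Iio, hx, div_lt_iff₀ hc, zero_mul]
    constructor
    · rintro ⟨⟨h0, -⟩, hA'⟩
      exact ⟨hA', by linarith⟩
    · rintro ⟨hA', hneg⟩
      have h1 : -1 ≤ -x / c := hA hA'
      rw [le_div_iff₀ hc] at h1
      exact ⟨⟨by linarith, by linarith⟩, hA'⟩
  rw [hset, volume_preimage_mul_add (by simp [hc.ne']), inv_neg, inv_inv, abs_neg,
    abs_of_pos hc]

lemma volume_Ioc_inter_preimage_fract {ρ : ℝ} (hρ : 0 < ρ) (a : ℕ) {A : Set ℝ}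
    (hA : MeasurableSet A) :
    volume (Ioc (1 - ρ * a) 1 ∩ (fun x => Int.fract ((1 - x) / ρ)) ⁻¹' A) =
      ENNReal.ofReal (ρ * a) * volume (A ∩ Ico 0 1) := by
  have hset : Ioc (1 - ρ * a) 1 ∩ (fun x => Int.fract ((1 - x) / ρ)) ⁻¹' A =
      (fun x => -ρ⁻¹ * x + ρ⁻¹) ⁻¹' (Int.fract ⁻¹' A ∩ Ico 0 a) := by
    ext x
    have hx : -ρ⁻¹ * x + ρ⁻¹ = (1 - x) / ρ := by ring
    simp only [mem_inter_iff, mem_preimage, mem_Ioc, mem_Ico, hx, le_div_iff₀ hρ,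
      div_lt_iff₀ hρ, zero_mul]
    constructor
    · rintro ⟨⟨h1, h2⟩, hA'⟩
      exact ⟨hA', by linarith, by linarith⟩
    · rintro ⟨hA', h1, h2⟩
      exact ⟨⟨by linarith, by linarith⟩, hA'⟩
  rw [hset, volume_preimage_mul_add (by simp [hρ.ne']), volume_fract_preimage_inter_Ico hA,
    inv_neg, inv_inv, abs_neg, abs_of_pos hρ, ← mul_assoc, ← ENNReal.ofReal_natCast,
    ← ENNReal.ofReal_mul hρ.le]

lemma measureReal_eq_inter_Ioi_add_inter_Iio {A : Set ℝ} (hA : volume A ≠ ⊤) :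
    volume.real A = volume.real (A ∩ Ioi 0) + volume.real (A ∩ Iio 0) := by
  rw [← measureReal_inter_add_sdiff measurableSet_Iio hA, add_comm, sdiff_eq, compl_Iio,
    measureReal_congr (ae_eq_set_inter (ae_eq_refl A) Ioi_ae_eq_Ici)]

lemma gaussMap_nonneg (ρ : ℝ) : 0 ≤ gaussMap ρ := by
  unfold gaussMap; split_ifs
  exacts [le_rfl, Int.fract_nonneg _]

lemma gaussMap_lt_one (ρ : ℝ) : gaussMap ρ < 1 := by
  unfold gaussMap; split_ifs
  exacts [one_pos, Int.fract_lt_one _]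

lemma one_sub_mul_gaussMap {ρ : ℝ} (hρ : 0 < ρ) : 1 - ρ * gaussMap ρ = ρ * ⌊1 / ρ⌋₊ := by
  rw [gaussMap, if_neg hρ.ne', Int.fract, ← Int.natCast_floor_eq_floor (by positivity),
    Int.cast_natCast]
  field_simp
  ring

lemma mul_gaussMap_le_half {ρ : ℝ} (hρ : 0 < ρ) (hρ1 : ρ ≤ 1) : ρ * gaussMap ρ ≤ 1 / 2 := by
  have ha : (1 : ℝ) ≤ ⌊1 / ρ⌋₊ := by
    exact_mod_cast Nat.one_le_floor_iff _ |>.2 (by rw [le_div_iff₀ hρ]; linarith)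
  have hlt : ρ * gaussMap ρ < ρ := mul_lt_of_lt_one_right hρ (gaussMap_lt_one ρ)
  nlinarith [one_sub_mul_gaussMap hρ]

lemma mapsTo_fiberMap (ρ : ℝ) : MapsTo (fiberMap ρ) (Icc (-1) 1) (Icc (-1) 1) := by
  rintro x ⟨hx1, hx2⟩
  unfold fiberMap
  split_ifs with h0 hneg hsmall
  · simp
  · constructor <;> linarith
  · have hc : 0 < ρ * gaussMap ρ := by linarith
    constructor
    · rw [le_div_iff₀ hc]; linarith
    · exact (div_neg_of_neg_of_pos (by linarith) hc).le.trans zero_le_one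
  · exact ⟨by linarith [Int.fract_nonneg ((1 - x) / ρ)], (Int.fract_lt_one _).le⟩

lemma measurable_fiberMap (ρ : ℝ) : Measurable (fiberMap ρ) := by
  unfold fiberMap
  refine Measurable.ite (MeasurableSet.const _) measurable_const ?_
  refine Measurable.ite measurableSet_Iic measurable_neg ?_
  exact Measurable.ite measurableSet_Iic (by fun_prop)
    ((measurable_const.sub measurable_id).div_const ρ).fract

lemma fiberComp_succ (θ : ℕ → ℝ) (n : ℕ) (x : ℝ) :
    fiberComp θ (n + 1) x = fiberComp θ n (fiberMap (θ n) x) := by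
  simp only [fiberComp, List.range_succ, List.foldr_append, List.foldr_cons, List.foldr_nil]

lemma measurable_fiberComp (θ : ℕ → ℝ) (n : ℕ) : Measurable (fiberComp θ n) := by
  induction n with
  | zero => exact measurable_id
  | succ n ih => exact funext (fiberComp_succ θ n) ▸ ih.comp (measurable_fiberMap (θ n))

lemma sep_fiberComp_succ (θ : ℕ → ℝ) (B : Set ℝ) (n : ℕ) :
    {x ∈ Icc (-1 : ℝ) 1 | fiberComp θ (n + 1) x ∈ B} =
      {x ∈ Icc (-1 : ℝ) 1 | fiberMap (θ n) x ∈ {y ∈ Icc (-1 : ℝ) 1 | fiberComp θ n y ∈ B}} := by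
  ext x
  simp only [mem_ofPred_eq, fiberComp_succ]
  exact ⟨fun ⟨hx, hB⟩ => ⟨hx, mapsTo_fiberMap _ hx, hB⟩, fun ⟨hx, _, hB⟩ => ⟨hx, hB⟩⟩

lemma preimage_fiberMap_inter_Iio {ρ : ℝ} (hρ : ρ ≠ 0) {A : Set ℝ} (hA : A ⊆ Icc (-1) 1) :
    {x ∈ Icc (-1 : ℝ) 1 | fiberMap ρ x ∈ A} ∩ Iio 0 = -(A ∩ Ioi 0) := by
  ext x
  simp only [mem_inter_iff, mem_ofPred_eq, mem_Icc, mem_Iio, Set.mem_neg, mem_Ioi, fiberMap,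
    if_neg hρ]
  constructor
  · rintro ⟨⟨-, hfx⟩, hx⟩
    rw [if_pos hx.le] at hfx
    exact ⟨hfx, by linarith⟩
  · rintro ⟨hA', hx⟩
    rw [if_pos (by linarith)]
    exact ⟨⟨⟨by linarith [(hA hA').2], by linarith⟩, hA'⟩, by linarith⟩

lemma preimage_fiberMap_inter_Ioi {ρ : ℝ} (hρ : 0 < ρ) (hc : ρ * gaussMap ρ ≤ 1) (A : Set ℝ) :
    {x ∈ Icc (-1 : ℝ) 1 | fiberMap ρ x ∈ A} ∩ Ioi 0 =
      Ioc 0 (ρ * gaussMap ρ) ∩ (fun x => -x / (ρ * gaussMap ρ)) ⁻¹' A ∪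
        Ioc (ρ * gaussMap ρ) 1 ∩ (fun x => Int.fract ((1 - x) / ρ)) ⁻¹' A := by
  have hc0 : 0 ≤ ρ * gaussMap ρ := mul_nonneg hρ.le (gaussMap_nonneg ρ)
  ext x
  simp only [mem_inter_iff, mem_ofPred_eq, mem_Icc, mem_Ioi, mem_union, mem_Ioc, mem_preimage,
    fiberMap, if_neg hρ.ne']
  constructor
  · rintro ⟨⟨⟨-, hx1⟩, hfx⟩, hx0⟩
    rw [if_neg hx0.not_ge] at hfx
    by_cases hxc : x ≤ ρ * gaussMap ρ
    · rw [if_pos hxc] at hfx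
      exact Or.inl ⟨⟨hx0, hxc⟩, hfx⟩
    · rw [if_neg hxc] at hfx
      exact Or.inr ⟨⟨not_le.1 hxc, hx1⟩, hfx⟩
  · rintro (⟨⟨hx0, hxc⟩, hfx⟩ | ⟨⟨hxc, hx1⟩, hfx⟩)
    · rw [if_neg hx0.not_ge, if_pos hxc]
      exact ⟨⟨⟨by linarith, by linarith⟩, hfx⟩, hx0⟩
    · rw [if_neg (by linarith), if_neg hxc.not_ge]
      exact ⟨⟨⟨by linarith, hx1⟩, hfx⟩, by linarith⟩

section Step

variable {ρ : ℝ} {A : Set ℝ}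

lemma volume_preimage_fiberMap_inter_Iio (hρ : ρ ≠ 0) (hA : A ⊆ Icc (-1) 1) :
    volume ({x ∈ Icc (-1 : ℝ) 1 | fiberMap ρ x ∈ A} ∩ Iio 0) = volume (A ∩ Ioi 0) := by
  rw [preimage_fiberMap_inter_Iio hρ hA, Measure.measure_neg]

lemma volume_preimage_fiberMap_inter_Ioi (hρ : 0 < ρ) (hρ1 : ρ ≤ 1) (hAm : MeasurableSet A)
    (hA : A ⊆ Icc (-1) 1) :
    volume ({x ∈ Icc (-1 : ℝ) 1 | fiberMap ρ x ∈ A} ∩ Ioi 0) =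
      ENNReal.ofReal (ρ * gaussMap ρ) * volume (A ∩ Iio 0) +
        ENNReal.ofReal (1 - ρ * gaussMap ρ) * volume (A ∩ Ioi 0) := by
  have hc := mul_gaussMap_le_half hρ hρ1
  have hfract := volume_Ioc_inter_preimage_fract hρ ⌊1 / ρ⌋₊ hAm
  rw [← one_sub_mul_gaussMap hρ, sub_sub_cancel,
    volume_inter_Ico_zero_one fun x hx => (hA hx).2] at hfract
  rw [preimage_fiberMap_inter_Ioi hρ (by linarith) A,
    measure_union ((Ioc_disjoint_Ioc_of_le le_rfl).mono inter_subset_left inter_subset_left)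
      (measurableSet_Ioc.inter (Measurable.fract (by fun_prop) hAm)),
    volume_Ioc_inter_preimage_neg_div (mul_nonneg hρ.le (gaussMap_nonneg ρ))
      fun x hx => (hA hx).1, hfract]

lemma measureReal_preimage_fiberMap_inter_Ioi (hρ : 0 < ρ) (hρ1 : ρ ≤ 1)
    (hAm : MeasurableSet A) (hA : A ⊆ Icc (-1) 1) :
    volume.real ({x ∈ Icc (-1 : ℝ) 1 | fiberMap ρ x ∈ A} ∩ Ioi 0) =
      ρ * gaussMap ρ * volume.real (A ∩ Iio 0) +
        (1 - ρ * gaussMap ρ) * volume.real (A ∩ Ioi 0) := by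
  have hfin : ∀ s, volume (A ∩ s) ≠ ⊤ := fun s =>
    measure_ne_top_of_subset (inter_subset_left.trans hA) measure_Icc_lt_top.ne
  rw [Measure.real, volume_preimage_fiberMap_inter_Ioi hρ hρ1 hAm hA,
    ENNReal.toReal_add (ENNReal.mul_ne_top ENNReal.ofReal_ne_top (hfin _))
      (ENNReal.mul_ne_top ENNReal.ofReal_ne_top (hfin _)),
    ENNReal.toReal_mul, ENNReal.toReal_mul, ENNReal.toReal_ofReal
      (mul_nonneg hρ.le (gaussMap_nonneg ρ)),
    ENNReal.toReal_ofReal (by linarith [mul_gaussMap_le_half hρ hρ1])]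
  rfl

end Step

/-- **Lemma A.2.** For any sequence of irrationals `θ_n ⊆ [0,1]` and any Borel set
`B ⊆ [-1,1]`, the sequence `λ(Ψ_n⁻¹(B))` converges, and its limit `L` satisfies
`θ₀G(θ₀)·λ(B) ≤ L ≤ (2 - θ₀G(θ₀))·λ(B)`. -/
theorem fiberCompMeasureLimit (θ : ℕ → ℝ) (hθ : ∀ n, θ n ∈ Icc (0 : ℝ) 1)
    (hirr : ∀ n, Irrational (θ n))
    (B : Set ℝ) (hBm : MeasurableSet B) (hBsub : B ⊆ Icc (-1 : ℝ) 1) :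
    ∃ L : ℝ,
      Tendsto (fun n : ℕ =>
          (volume {x ∈ Icc (-1 : ℝ) 1 | fiberComp θ n x ∈ B}).toReal) atTop (𝓝 L) ∧
      θ 0 * gaussMap (θ 0) * (volume B).toReal ≤ L ∧
      L ≤ (2 - θ 0 * gaussMap (θ 0)) * (volume B).toReal := by
  have hρ : ∀ n, 0 < θ n := fun n => (hθ n).1.lt_of_ne (hirr n).ne_zero.symm
  set A : ℕ → Set ℝ := fun n => {x ∈ Icc (-1 : ℝ) 1 | fiberComp θ n x ∈ B}
  have hA : ∀ n, A n ⊆ Icc (-1) 1 := fun n x hx => hx.1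
  have hAm : ∀ n, MeasurableSet (A n) := fun n =>
    measurableSet_Icc.inter (measurable_fiberComp θ n hBm)
  have hA0 : A 0 = B := sep_mem_eq.trans (inter_eq_right.2 hBsub)
  have hvol : ∀ n, (volume (A n)).toReal =
      volume.real (A n ∩ Ioi 0) + volume.real (A n ∩ Iio 0) := fun n =>
    measureReal_eq_inter_Ioi_add_inter_Iio
      (measure_ne_top_of_subset (hA n) measure_Icc_lt_top.ne)
  have hAsucc : ∀ n, A (n + 1) = {x ∈ Icc (-1 : ℝ) 1 | fiberMap (θ n) x ∈ A n} :=
    sep_fiberComp_succ θ B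
  obtain ⟨L, hL, hlow, hupp⟩ := exists_tendsto_add_of_recurrence
    (p := fun n => volume.real (A n ∩ Ioi 0)) (q := fun n => volume.real (A n ∩ Iio 0))
    (fun n => ⟨mul_nonneg (hρ n).le (gaussMap_nonneg _), mul_gaussMap_le_half (hρ n) (hθ n).2⟩)
    (fun n => by
      rw [hAsucc]; exact measureReal_preimage_fiberMap_inter_Ioi (hρ n) (hθ n).2 (hAm n) (hA n))
    (fun n => by
      rw [hAsucc]; exact congrArg ENNReal.toReal
        (volume_preimage_fiberMap_inter_Iio (hρ n).ne' (hA n)))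
    measureReal_nonneg measureReal_nonneg
  refine ⟨L, hL.congr fun n => (hvol n).symm, ?_, ?_⟩ <;> rwa [← hA0, hvol 0]
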